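/- arXiv:1404.2133 — 2 statements merged into one kernel-verified Lean document; each statement's English description precedes it below -/
import Mathlib

section
/- Kurtz-type drift identity in expectation: for the Moran chain (Z_n) with transition matrix p, for every z ∈ P^m_N, E[Z_{n+1}/m − Z_n/m | Z_n = z] = (1/(λm)) F(z/m), where F_i(x) = Σ_j f_j Q_{ji} x_j − x_i Σ_j f_j x_j. -/
open Finset

/-- The population obtained from `z` by removing one individual of type `i`
and adding one of type `j`. -/
def moranStep (N : ℕ) (z : Fin N → ℕ) (i j : Fin N) : Fin N → ℕ :=
  fun k => z k - (if k = i then 1 else 0) + (if k = j then 1 else 0)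

/-- The off-diagonal Moran transition probability
`p(z, z - e_i + e_j) = (z_i/m) (1/(λ m)) ∑_k f_k Q_{kj} z_k`. -/
noncomputable def moranRate (N m : ℕ) (f : Fin N → ℝ) (Q : Fin N → Fin N → ℝ)
    (lam : ℝ) (z : Fin N → ℕ) (i j : Fin N) : ℝ :=
  ((z i : ℝ) / m) * (1 / (lam * m)) * ∑ k, f k * Q k j * (z k : ℝ)

/-- The Moran transition matrix: `p(z, z - e_i + e_j)` is `moranRate` for `i ≠ j`,
other off-diagonal entries vanish, and the diagonal makes rows sum to one. -/
noncomputable def moranP (N m : ℕ) (f : Fin N → ℝ) (Q : Fin N → Fin N → ℝ)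
    (lam : ℝ) (z z' : Fin N → ℕ) : ℝ :=
  if z' = z then
    1 - ∑ i, ∑ j ∈ Finset.univ.erase i, moranRate N m f Q lam z i j
  else
    ∑ i, ∑ j ∈ Finset.univ.erase i,
      if z' = moranStep N z i j then moranRate N m f Q lam z i j else 0

/-!
The only moves are `z ↦ z - e_a + e_b`, and such a move changes `z_i / m` by
`(δ_{bi} - δ_{ai}) / m`, so the drift of coordinate `i` is (inflow into `i` minus outflow
from `i`) divided by `m`. The inflow `∑_a p(z, z - e_a + e_i)` collapses to
`(1/(λm)) ∑_k f_k Q_{ki} z_k` because `∑_a z_a = m`, and the outflow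
`∑_b p(z, z - e_i + e_b)` to `(z_i/m)(1/(λm)) ∑_k f_k z_k` because `Q` is row-stochastic.
-/

section

variable {N m : ℕ} {f : Fin N → ℝ} {Q : Fin N → Fin N → ℝ} {lam : ℝ} {z : Fin N → ℕ}

theorem cast_moranStep {R : Type*} [AddGroupWithOne R] {a : Fin N} (ha : 1 ≤ z a)
    (b k : Fin N) :
    (moranStep N z a b k : R) = z k - (if k = a then 1 else 0) + (if k = b then 1 else 0) := by
  unfold moranStep
  split_ifs <;> subst_vars <;> simp [Nat.cast_sub ha]

theorem moranStep_mem_antidiagonalTuple (hz : ∑ k, z k = m) {a : Fin N} (ha : 1 ≤ z a)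
    (b : Fin N) : moranStep N z a b ∈ Finset.Nat.antidiagonalTuple N m := by
  rw [Finset.Nat.mem_antidiagonalTuple, ← hz, ← Nat.cast_inj (R := ℤ)]
  push_cast
  simp [cast_moranStep ha, sum_add_distrib]

theorem moranRate_eq_zero {a : Fin N} (ha : z a = 0) (b : Fin N) :
    moranRate N m f Q lam z a b = 0 := by
  simp [moranRate, ha]

theorem sum_sub_mul_moranP (hz : ∑ k, z k = m) (h : (Fin N → ℕ) → ℝ) :
    ∑ z' ∈ Finset.Nat.antidiagonalTuple N m, (h z' - h z) * moranP N m f Q lam z z'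
      = ∑ a, ∑ b ∈ univ.erase a, moranRate N m f Q lam z a b * (h (moranStep N z a b) - h z) := by
  -- The factor `h z' - h z` kills the diagonal entry of `moranP`, whatever it is.
  have off_diagonal : ∀ z', (h z' - h z) * moranP N m f Q lam z z' = ∑ a, ∑ b ∈ univ.erase a,
      if z' = moranStep N z a b then moranRate N m f Q lam z a b * (h z' - h z) else 0 := by
    intro z'
    by_cases hz' : z' = z
    · simp [hz']
    · simp only [moranP, if_neg hz', mul_sum, mul_ite, mul_zero, mul_comm]
  simp_rw [off_diagonal]
  rw [sum_comm]
  refine sum_congr rfl fun a _ => ?_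
  rw [sum_comm]
  refine sum_congr rfl fun b _ => ?_
  rw [sum_ite_eq']
  split_ifs with hmem
  · rfl
  · have ha : z a = 0 := by
      by_contra ha
      exact hmem (moranStep_mem_antidiagonalTuple hz (Nat.one_le_iff_ne_zero.mpr ha) b)
    simp [moranRate_eq_zero ha]

theorem moranRate_mul_coord_increment (a b i : Fin N) :
    moranRate N m f Q lam z a b * ((moranStep N z a b i : ℝ) / m - z i / m)
      = moranRate N m f Q lam z a b
          * (((if i = b then 1 else 0) - (if i = a then 1 else 0)) / m) := by
  rcases Nat.eq_zero_or_pos (z a) with ha | ha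
  · simp [moranRate_eq_zero ha]
  · rw [cast_moranStep ha]
    ring

theorem sum_moranRate_mul_coord_increment (i : Fin N) :
    ∑ a, ∑ b ∈ univ.erase a, moranRate N m f Q lam z a b
        * (((if i = b then 1 else 0) - (if i = a then 1 else 0)) / m)
      = (∑ a, moranRate N m f Q lam z a i - ∑ b, moranRate N m f Q lam z i b) / m := by
  have diagonal_vanishes : ∀ a, ∑ b ∈ univ.erase a, moranRate N m f Q lam z a b
        * (((if i = b then 1 else 0) - (if i = a then 1 else 0)) / m)
      = ∑ b, moranRate N m f Q lam z a b
        * (((if i = b then 1 else 0) - (if i = a then 1 else 0)) / m) :=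
    fun a => sum_erase _ (by simp)
  simp_rw [diagonal_vanishes, mul_div_assoc', mul_sub, mul_ite, mul_one, mul_zero, sub_div,
    sum_sub_distrib, ← sum_div, sum_ite_irrel, sum_const_zero, sum_ite_eq, mem_univ, if_true]

theorem sum_moranRate_left (hm : m ≠ 0) (hz : ∑ k, z k = m) (j : Fin N) :
    ∑ a, moranRate N m f Q lam z a j = 1 / (lam * m) * ∑ k, f k * Q k j * z k := by
  have hm' : (m : ℝ) ≠ 0 := Nat.cast_ne_zero.mpr hm
  simp only [moranRate, ← sum_mul, ← sum_div]
  rw [← Nat.cast_sum, hz, div_self hm', one_mul]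

theorem sum_moranRate_right (hQ : ∀ k, ∑ j, Q k j = 1) (i : Fin N) :
    ∑ j, moranRate N m f Q lam z i j = z i / m * (1 / (lam * m)) * ∑ k, f k * z k := by
  simp only [moranRate, ← mul_sum]
  rw [sum_comm]
  refine congrArg _ (sum_congr rfl fun k _ => ?_)
  rw [← sum_mul, ← mul_sum, hQ, mul_one]

end

theorem moran_expected_increment_general
    (N : ℕ) (f : Fin N → ℝ)
    (Q : Fin N → Fin N → ℝ) (hQ1 : ∀ i, ∑ j, Q i j = 1)
    (lam : ℝ)
    (m : ℕ) (hm : 1 ≤ m) (z : Fin N → ℕ) (hz : ∑ i, z i = m) (i : Fin N) :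
    ∑ z' ∈ Finset.Nat.antidiagonalTuple N m,
        ((z' i : ℝ) / m - (z i : ℝ) / m) * moranP N m f Q lam z z'
      = (1 / (lam * m)) *
        (∑ j, f j * Q j i * ((z j : ℝ) / m)
          - ((z i : ℝ) / m) * ∑ j, f j * ((z j : ℝ) / m)) := by
  calc _ = ∑ a, ∑ b ∈ univ.erase a, moranRate N m f Q lam z a b
          * ((moranStep N z a b i : ℝ) / m - z i / m) :=
        sum_sub_mul_moranP hz fun z' => (z' i : ℝ) / m
    _ = (∑ a, moranRate N m f Q lam z a i - ∑ b, moranRate N m f Q lam z i b) / m := by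
        simp_rw [moranRate_mul_coord_increment]
        exact sum_moranRate_mul_coord_increment i
    _ = _ := by
        rw [sum_moranRate_left (by omega) hz, sum_moranRate_right hQ1]
        simp only [mul_div_assoc', ← sum_div]
        ring

/-- Kurtz-type drift identity in expectation: the expected one-step increment of
the rescaled Moran chain started at `z` equals `(1/(λ m)) F(z/m)`, where `F` is
the Eigen vector field. -/
theorem moran_expected_increment
    (N : ℕ) (hN : 1 ≤ N) (f : Fin N → ℝ) (hf : ∀ j, 0 ≤ f j)
    (Q : Fin N → Fin N → ℝ) (hQ0 : ∀ i j, 0 ≤ Q i j) (hQ1 : ∀ i, ∑ j, Q i j = 1)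
    (lam : ℝ) (hlam : ∀ j, f j ≤ lam) (hlam0 : 0 < lam)
    (m : ℕ) (hm : 1 ≤ m) (z : Fin N → ℕ) (hz : ∑ i, z i = m) (i : Fin N) :
    ∑ z' ∈ Finset.Nat.antidiagonalTuple N m,
        ((z' i : ℝ) / m - (z i : ℝ) / m) * moranP N m f Q lam z z'
      = (1 / (lam * m)) *
        (∑ j, f j * Q j i * ((z j : ℝ) / m)
          - ((z i : ℝ) / m) * ∑ j, f j * ((z j : ℝ) / m)) :=
  moran_expected_increment_general N f Q hQ1 lam m hm z hz i
end

section
/- Convergence of the Moran model to Eigen's model: let (Z_n) be the Moran chain on P^m_N and suppose Z_0/m → x^0 ∈ S_N as m → ∞. Let x(t) be the solution of Eigen's equations x_i' = Σ_j f_j Q_{ji} x_j − x_i Σ_j f_j x_j with x(0) = x^0. Then for every δ > 0 and T > 0, P( sup_{0 ≤ t ≤ T} |Z_{⌊λmt⌋}/m − x(t)| > δ ) → 0 as m → ∞. -/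
/-!
With time step `τ = 1/(λm)`, the frequencies `Z_r/m` of the Moran chain follow a perturbed Euler
scheme for Eigen's equations: `Z_r/m = Z_0/m + ∑_{k<r} τ b(Z_k/m) + M_r/m`, where `b` is Eigen's
vector field (the mean jump of the chain is `b(Z/m)/λ`) and each coordinate of `M` is a martingale
whose increments have conditional variance at most `1`, since the chain moves by at most one
individual per step. Kolmogorov's maximal inequality bounds the probability that some `|M_r|`,
`r ≤ λmT`, exceeds `ηm` by `N λ T / (η² m)`; outside this event the discrete Grönwall inequality
keeps the scheme within `O(|Z_0/m - x⁰| + η + 1/m)` of `x` on `[0, T]`.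

Since the law of the chain is only known on cylinder sets, expectations over paths are computed
by recursion on the remaining number of steps and compared with probabilities by backward
induction over cylinders.
-/

open Finset

namespace MarkovPath

section Expect

variable {α : Type*} (S : Finset α) (p : α → α → ℝ)

/-- `expect S p k j F c` is the expectation of `F` after `j` steps of the chain with transition
matrix `p` on `S`, continuing the path `c` from time `k`: paths are functions `ℕ → α`, and the
step from time `k` overwrites the coordinate `k + 1`. -/
noncomputable def expect : ℕ → ℕ → ((ℕ → α) → ℝ) → (ℕ → α) → ℝ
  | _, 0, F, c => F c
  | k, j + 1, F, c => ∑ z ∈ S, p (c k) z * expect (k + 1) j F (Function.update c (k + 1) z)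

variable {S p}

theorem expect_zero (k : ℕ) (F : (ℕ → α) → ℝ) (c : ℕ → α) : expect S p k 0 F c = F c := rfl

theorem expect_succ (k j : ℕ) (F : (ℕ → α) → ℝ) (c : ℕ → α) :
    expect S p k (j + 1) F c =
      ∑ z ∈ S, p (c k) z * expect S p (k + 1) j F (Function.update c (k + 1) z) := rfl

theorem expect_sum {ι : Type*} (t : Finset ι) (F : ι → (ℕ → α) → ℝ) (k j : ℕ) (c : ℕ → α) :
    expect S p k j (fun c' => ∑ i ∈ t, F i c') c = ∑ i ∈ t, expect S p k j (F i) c := by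
  induction j generalizing k c with
  | zero => rfl
  | succ j ih =>
    simp only [expect_succ, ih, mul_sum]
    exact sum_comm

theorem expect_const_mul (a : ℝ) (F : (ℕ → α) → ℝ) (k j : ℕ) (c : ℕ → α) :
    expect S p k j (fun c' => a * F c') c = a * expect S p k j F c := by
  induction j generalizing k c with
  | zero => rfl
  | succ j ih =>
    simp only [expect_succ, ih, mul_sum]
    exact sum_congr rfl fun _ _ => mul_left_comm _ _ _

variable (hp0 : ∀ z ∈ S, ∀ z', 0 ≤ p z z')
include hp0

theorem expect_mono {F G : (ℕ → α) → ℝ} (hFG : ∀ c, F c ≤ G c) {k j : ℕ} {c : ℕ → α}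
    (hc : c k ∈ S) : expect S p k j F c ≤ expect S p k j G c := by
  induction j generalizing k c with
  | zero => exact hFG c
  | succ j ih =>
    refine sum_le_sum fun z hz => mul_le_mul_of_nonneg_left ?_ (hp0 _ hc z)
    exact ih (by rwa [Function.update_self])

theorem expect_nonneg {F : (ℕ → α) → ℝ} (hF : ∀ c, 0 ≤ F c) {k j : ℕ} {c : ℕ → α}
    (hc : c k ∈ S) : 0 ≤ expect S p k j F c := by
  induction j generalizing k c with
  | zero => exact hF c
  | succ j ih =>
    exact sum_nonneg fun z hz => mul_nonneg (hp0 _ hc z) (ih (by rwa [Function.update_self]))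

end Expect

section Mart

variable {α : Type*} (S : Finset α) (p : α → α → ℝ) (φ : α → ℝ)

noncomputable def drift (z : α) : ℝ := ∑ z' ∈ S, p z z' * (φ z' - φ z)

noncomputable def mart (r : ℕ) (c : ℕ → α) : ℝ :=
  φ (c r) - φ (c 0) - ∑ k ∈ range r, drift S p φ (c k)

noncomputable def stoppedMart (a : ℝ) : ℕ → (ℕ → α) → ℝ
  | 0, _ => 0
  | r + 1, c => if a < |stoppedMart a r c| then stoppedMart a r c else mart S p φ (r + 1) c

variable {S p φ}

theorem mart_zero (c : ℕ → α) : mart S p φ 0 c = 0 := by simp [mart]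

theorem mart_update {r k : ℕ} (hrk : r < k) (c : ℕ → α) (z : α) :
    mart S p φ r (Function.update c k z) = mart S p φ r c := by
  have h : ∀ i ≤ r, Function.update c k z i = c i := fun i hi =>
    Function.update_of_ne (by omega) _ _
  simp only [mart, h r le_rfl, h 0 (Nat.zero_le r)]
  congr 1
  exact sum_congr rfl fun i hi => by rw [h i (mem_range.1 hi).le]

theorem mart_succ_update (r : ℕ) (c : ℕ → α) (z : α) :
    mart S p φ (r + 1) (Function.update c (r + 1) z) =
      mart S p φ r c + (φ z - φ (c r) - drift S p φ (c r)) := by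
  have h : ∀ i ≤ r, Function.update c (r + 1) z i = c i := fun i hi =>
    Function.update_of_ne (by omega) _ _
  simp only [mart, Function.update_self, h 0 (Nat.zero_le r), sum_range_succ, h r le_rfl]
  rw [sum_congr rfl fun i hi => by rw [h i (mem_range.1 hi).le]]
  ring

theorem stoppedMart_update (a : ℝ) {r k : ℕ} (hrk : r < k) (c : ℕ → α) (z : α) :
    stoppedMart S p φ a r (Function.update c k z) = stoppedMart S p φ a r c := by
  induction r with
  | zero => rfl
  | succ r ih => simp only [stoppedMart, ih (by omega), mart_update hrk]

theorem stoppedMart_eq_mart {a : ℝ} {r : ℕ} {c : ℕ → α} (h : ¬ a < |stoppedMart S p φ a r c|) :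
    stoppedMart S p φ a r c = mart S p φ r c := by
  induction r with
  | zero => simp [stoppedMart, mart_zero]
  | succ r ih =>
    simp only [stoppedMart] at h ⊢
    split_ifs at h ⊢ with hr
    · exact absurd hr h
    · rfl

theorem lt_abs_stoppedMart {a : ℝ} (ha : 0 ≤ a) {c : ℕ → α} {r n : ℕ} (hrn : r ≤ n)
    (hr : a < |mart S p φ r c|) : a < |stoppedMart S p φ a n c| := by
  induction n, hrn using Nat.le_induction with
  | base =>
    cases r with
    | zero => simp [mart_zero] at hr; linarith [abs_nonneg a]
    | succ r =>
      simp only [stoppedMart]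
      split_ifs with h
      · exact h
      · exact hr
  | succ n _ ih =>
    simp only [stoppedMart, if_pos ih]
    exact ih

end Mart

section Kolmogorov

variable {α : Type*} {S : Finset α} {p : α → α → ℝ} {φ : α → ℝ}
  (hp0 : ∀ z ∈ S, ∀ z', 0 ≤ p z z') (hp1 : ∀ z ∈ S, ∑ z' ∈ S, p z z' = 1)
  (hjump : ∀ z ∈ S, ∀ z', p z z' ≠ 0 → |φ z' - φ z| ≤ 1)
include hp0 hp1 hjump

/-- The cross term vanishes since `drift` is the mean increment, and the variance of an increment
is at most its second moment, which is at most `1`. -/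
theorem sum_mul_add_sq_le {z : α} (hz : z ∈ S) (s : ℝ) :
    ∑ z' ∈ S, p z z' * (s + (φ z' - φ z - drift S p φ z)) ^ 2 ≤ s ^ 2 + 1 := by
  set D := drift S p φ z with hD
  have hsq : ∑ z' ∈ S, p z z' * (φ z' - φ z) ^ 2 ≤ 1 := by
    rw [← hp1 z hz]
    refine sum_le_sum fun z' _ => ?_
    by_cases h : p z z' = 0
    · simp [h]
    · have := abs_le.1 (hjump z hz z' h)
      exact mul_le_of_le_one_right (hp0 z hz z') (by nlinarith)
  have hexp : ∀ z', p z z' * (s + (φ z' - φ z - D)) ^ 2 =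
      (s - D) ^ 2 * p z z' + 2 * (s - D) * (p z z' * (φ z' - φ z)) +
        p z z' * (φ z' - φ z) ^ 2 := fun z' => by ring
  have hdrift : ∑ z' ∈ S, p z z' * (φ z' - φ z) = D := rfl
  simp only [hexp, sum_add_distrib, ← mul_sum, hp1 z hz, hdrift]
  nlinarith [sq_nonneg D]

theorem expect_stoppedMart_sq_le (a : ℝ) (j : ℕ) {k : ℕ} {c : ℕ → α} (hc : c k ∈ S) :
    expect S p k j (fun c' => stoppedMart S p φ a (k + j) c' ^ 2) c ≤
      stoppedMart S p φ a k c ^ 2 + j := by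
  induction j generalizing k c with
  | zero => simp [expect_zero]
  | succ j ih =>
    rw [expect_succ]
    calc ∑ z ∈ S, p (c k) z * expect S p (k + 1) j
            (fun c' => stoppedMart S p φ a (k + (j + 1)) c' ^ 2) (Function.update c (k + 1) z)
        ≤ ∑ z ∈ S, p (c k) z * (stoppedMart S p φ a (k + 1) (Function.update c (k + 1) z) ^ 2
            + j) := by
          refine sum_le_sum fun z hz => mul_le_mul_of_nonneg_left ?_ (hp0 _ hc z)
          rw [show k + (j + 1) = k + 1 + j by ring]
          exact ih (by rwa [Function.update_self])
      _ ≤ stoppedMart S p φ a k c ^ 2 + 1 + j := by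
          simp only [mul_add, sum_add_distrib, ← sum_mul, hp1 _ hc, one_mul]
          gcongr
          simp only [stoppedMart, stoppedMart_update a (Nat.lt_succ_self k)]
          split_ifs with h
          · rw [← sum_mul, hp1 _ hc]; linarith
          · simp only [mart_succ_update, ← stoppedMart_eq_mart h]
            exact sum_mul_add_sq_le hp0 hp1 hjump hc _
      _ = _ := by push_cast; ring

/-- Kolmogorov's maximal inequality, through the martingale stopped when it exceeds `a`: its
square gains at most `1` in expectation per step. -/
theorem expect_exists_lt_abs_mart_le {z₀ : α} (hz₀ : z₀ ∈ S) {a : ℝ} (ha : 0 < a) (n : ℕ) :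
    expect S p 0 n (fun c => if ∃ r ≤ n, a < |mart S p φ r c| then 1 else 0) (fun _ => z₀) ≤
      n / a ^ 2 := by
  calc _ ≤ expect S p 0 n (fun c => a⁻¹ ^ 2 * stoppedMart S p φ a (0 + n) c ^ 2) (fun _ => z₀) := by
        refine expect_mono hp0 (fun c => ?_) hz₀
        split_ifs with h
        · obtain ⟨r, hrn, hr⟩ := h
          have := pow_le_pow_left₀ ha.le (lt_abs_stoppedMart ha.le hrn hr).le 2
          rw [sq_abs] at this
          rw [inv_pow, zero_add, ← div_eq_inv_mul, le_div_iff₀ (by positivity), one_mul]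
          exact this
        · positivity
    _ ≤ a⁻¹ ^ 2 * (stoppedMart S p φ a 0 (fun _ => z₀) ^ 2 + n) := by
        rw [expect_const_mul]
        exact mul_le_mul_of_nonneg_left (expect_stoppedMart_sq_le hp0 hp1 hjump a n hz₀)
          (by positivity)
    _ = n / a ^ 2 := by simp [stoppedMart, div_eq_inv_mul]

end Kolmogorov

section Cylinder

open MeasureTheory

variable {α Ω : Type*} [MeasurableSpace Ω] {S : Finset α} {p : α → α → ℝ} {P : Measure Ω}
  {Z : ℕ → Ω → α}

def cylinder (Z : ℕ → Ω → α) (k : ℕ) (c : ℕ → α) : Set Ω := {ω | ∀ i ≤ k, Z i ω = c i}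

theorem forall_le_succ_update {q : ℕ → α → Prop} {k : ℕ} {c : ℕ → α} {z : α}
    (hc : ∀ i ≤ k, q i (c i)) (hz : q (k + 1) z) :
    ∀ i ≤ k + 1, q i (Function.update c (k + 1) z i) := by
  intro i hi
  rcases Nat.lt_or_ge i (k + 1) with hi' | hi'
  · rw [Function.update_of_ne (by omega)]; exact hc i (by omega)
  · obtain rfl : i = k + 1 := by omega
    simpa using hz

theorem measure_cylinder_succ_update
    (hMarkov : ∀ n : ℕ, ∀ h : ℕ → α, ∀ z',
      P {ω | (∀ k ≤ n, Z k ω = h k) ∧ Z (n + 1) ω = z'}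
        = ENNReal.ofReal (p (h n) z') * P {ω | ∀ k ≤ n, Z k ω = h k})
    (k : ℕ) (c : ℕ → α) (z : α) :
    P (cylinder Z (k + 1) (Function.update c (k + 1) z)) =
      ENNReal.ofReal (p (c k) z) * P (cylinder Z k c) := by
  have h : ∀ i ≤ k, Function.update c (k + 1) z i = c i := fun i hi =>
    Function.update_of_ne (by omega) _ _
  have hcyl : cylinder Z (k + 1) (Function.update c (k + 1) z) =
      {ω | (∀ i ≤ k, Z i ω = Function.update c (k + 1) z i) ∧ Z (k + 1) ω = z} := by
    ext ω
    refine ⟨fun hω => ⟨fun i hi => hω i (by omega), by simpa using hω (k + 1) le_rfl⟩,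
      fun ⟨hω, hz⟩ i hi => ?_⟩
    rcases Nat.lt_or_ge i (k + 1) with hi' | hi'
    · exact hω i (by omega)
    · obtain rfl : i = k + 1 := by omega
      simpa using hz
  rw [hcyl, hMarkov, h k le_rfl]
  congr 2
  ext ω
  exact forall₂_congr fun i hi => by rw [h i hi]

variable [Countable α] (hp0 : ∀ z ∈ S, ∀ z', 0 ≤ p z z') (hpS : ∀ z ∈ S, ∀ z' ∉ S, p z z' = 0)
  (hMarkov : ∀ n : ℕ, ∀ h : ℕ → α, ∀ z',
      P {ω | (∀ k ≤ n, Z k ω = h k) ∧ Z (n + 1) ω = z'}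
        = ENNReal.ofReal (p (h n) z') * P {ω | ∀ k ≤ n, Z k ω = h k})
include hp0 hpS hMarkov

/-- Backward induction over the remaining `j` steps, splitting each cylinder according to the
next state. -/
theorem measure_inter_cylinder_le {E : Set Ω} {n : ℕ} {F : (ℕ → α) → ℝ} (hF0 : ∀ c, 0 ≤ F c)
    (hE : ∀ ω ∈ E, ∀ c : ℕ → α, (∀ k ≤ n, c k = Z k ω ∧ c k ∈ S) → 1 ≤ F c) (j : ℕ) :
    ∀ k, k + j = n → ∀ c : ℕ → α, (∀ i ≤ k, c i ∈ S) →
      P (E ∩ cylinder Z k c) ≤ ENNReal.ofReal (expect S p k j F c) * P (cylinder Z k c) := by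
  induction j with
  | zero =>
    rintro k rfl c hc
    rcases (E ∩ cylinder Z k c).eq_empty_or_nonempty with h | ⟨ω, hωE, hωc⟩
    · simp [h]
    · have hF : 1 ≤ F c := hE ω hωE c fun i hi => ⟨(hωc i hi).symm, hc i hi⟩
      calc P (E ∩ cylinder Z k c) ≤ 1 * P (cylinder Z k c) := by
            rw [one_mul]; exact measure_mono Set.inter_subset_right
        _ ≤ ENNReal.ofReal (F c) * P (cylinder Z k c) := by
            gcongr; exact ENNReal.one_le_ofReal.2 hF
  | succ j ih =>
    intro k hkn c hc
    have hck : c k ∈ S := hc k le_rfl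
    set u : α → ℕ → α := fun z => Function.update c (k + 1) z
    set g : α → ENNReal := fun z =>
      ENNReal.ofReal (p (c k) z * expect S p (k + 1) j F (u z)) * P (cylinder Z k c)
    have hcover : E ∩ cylinder Z k c ⊆ ⋃ z, E ∩ cylinder Z (k + 1) (u z) :=
      fun ω ⟨hωE, hωc⟩ => Set.mem_iUnion.2
        ⟨Z (k + 1) ω, hωE, forall_le_succ_update (q := fun i a => Z i ω = a) hωc rfl⟩
    have hterm : ∀ z, P (E ∩ cylinder Z (k + 1) (u z)) ≤ g z := by
      intro z
      by_cases hz : z ∈ S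
      · have hexp := expect_nonneg hp0 hF0 (k := k + 1) (j := j) (c := u z) (by simpa [u] using hz)
        calc _ ≤ ENNReal.ofReal (expect S p (k + 1) j F (u z)) * P (cylinder Z (k + 1) (u z)) :=
              ih (k + 1) (by omega) (u z) (forall_le_succ_update (q := fun _ a => a ∈ S) hc hz)
          _ = g z := by
              rw [measure_cylinder_succ_update hMarkov, ← mul_assoc, ← ENNReal.ofReal_mul hexp,
                mul_comm (expect _ _ _ _ _ _)]
      · calc _ ≤ P (cylinder Z (k + 1) (u z)) := measure_mono Set.inter_subset_right
          _ = 0 := by simp [u, measure_cylinder_succ_update hMarkov, hpS _ hck z hz]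
          _ ≤ g z := zero_le
    calc P (E ∩ cylinder Z k c) ≤ ∑' z, P (E ∩ cylinder Z (k + 1) (u z)) :=
          (measure_mono hcover).trans (measure_iUnion_le _)
      _ ≤ ∑' z, g z := ENNReal.tsum_le_tsum hterm
      _ = ∑ z ∈ S, g z := tsum_eq_sum fun z hz => by simp [g, hpS _ hck z hz]
      _ = _ := by
          rw [← Finset.sum_mul, ← ENNReal.ofReal_sum_of_nonneg fun z hz =>
            mul_nonneg (hp0 _ hck z) (expect_nonneg hp0 hF0 (by simpa [u] using hz))]
          rfl

theorem measure_le_ofReal_expect [IsProbabilityMeasure P] {z₀ : α} (hZ0 : ∀ ω, Z 0 ω = z₀)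
    (hz₀ : z₀ ∈ S) {E : Set Ω} {n : ℕ} {F : (ℕ → α) → ℝ} (hF0 : ∀ c, 0 ≤ F c)
    (hE : ∀ ω ∈ E, ∀ c : ℕ → α, (∀ k ≤ n, c k = Z k ω ∧ c k ∈ S) → 1 ≤ F c) :
    P E ≤ ENNReal.ofReal (expect S p 0 n F fun _ => z₀) := by
  have huniv : cylinder Z 0 (fun _ => z₀) = Set.univ := by
    ext ω; simp [cylinder, hZ0]
  simpa [huniv] using measure_inter_cylinder_le hp0 hpS hMarkov hF0 hE n 0 (zero_add n)
    (fun _ => z₀) fun _ _ => hz₀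

end Cylinder

section Maximal

open MeasureTheory

variable {α Ω : Type*} [MeasurableSpace Ω] [Countable α] {S : Finset α} {p : α → α → ℝ}
  {P : Measure Ω} [IsProbabilityMeasure P] {Z : ℕ → Ω → α}

theorem measure_le_of_exists_lt_abs_mart {ι : Type*} [Fintype ι] {φ : ι → α → ℝ}
    (hp0 : ∀ z ∈ S, ∀ z', 0 ≤ p z z') (hp1 : ∀ z ∈ S, ∑ z' ∈ S, p z z' = 1)
    (hpS : ∀ z ∈ S, ∀ z' ∉ S, p z z' = 0)
    (hjump : ∀ l, ∀ z ∈ S, ∀ z', p z z' ≠ 0 → |φ l z' - φ l z| ≤ 1)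
    (hMarkov : ∀ n : ℕ, ∀ h : ℕ → α, ∀ z',
      P {ω | (∀ k ≤ n, Z k ω = h k) ∧ Z (n + 1) ω = z'}
        = ENNReal.ofReal (p (h n) z') * P {ω | ∀ k ≤ n, Z k ω = h k})
    {z₀ : α} (hZ0 : ∀ ω, Z 0 ω = z₀) (hz₀ : z₀ ∈ S) {a : ℝ} (ha : 0 < a) {n : ℕ} {E : Set Ω}
    (hE : ∀ ω ∈ E, ∀ c : ℕ → α, (∀ k ≤ n, c k = Z k ω ∧ c k ∈ S) →
      ∃ l, ∃ r ≤ n, a < |mart S p (φ l) r c|) :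
    P E ≤ ENNReal.ofReal (Fintype.card ι * (n / a ^ 2)) := by
  classical
  set F : ι → (ℕ → α) → ℝ := fun l c => if ∃ r ≤ n, a < |mart S p (φ l) r c| then 1 else 0
  have hF0 : ∀ l c, 0 ≤ F l c := fun l c => by simp only [F]; split_ifs <;> norm_num
  calc P E ≤ ENNReal.ofReal (expect S p 0 n (fun c => ∑ l, F l c) fun _ => z₀) := by
        refine measure_le_ofReal_expect hp0 hpS hMarkov hZ0 hz₀
          (fun c => sum_nonneg fun l _ => hF0 l c) fun ω hω c hc => ?_
        obtain ⟨l, hl⟩ := hE ω hω c hc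
        calc (1 : ℝ) = F l c := by simp [F, hl]
          _ ≤ ∑ l, F l c := single_le_sum (fun l _ => hF0 l c) (mem_univ l)
    _ ≤ ENNReal.ofReal (Fintype.card ι * (n / a ^ 2)) := by
        gcongr
        rw [expect_sum, ← nsmul_eq_mul, ← card_univ, ← sum_const]
        exact sum_le_sum fun l _ =>
          expect_exists_lt_abs_mart_le hp0 hp1 (hjump l) hz₀ ha n

end Maximal

end MarkovPath

def eigenField {N : ℕ} (f : Fin N → ℝ) (Q : Fin N → Fin N → ℝ) (y : Fin N → ℝ) : Fin N → ℝ :=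
  fun l => ∑ k, f k * Q k l * y k - y l * ∑ k, f k * y k

theorem norm_le_sqrt_sum_sq {ι : Type*} [Fintype ι] (v : ι → ℝ) : ‖v‖ ≤ √(∑ i, v i ^ 2) :=
  (pi_norm_le_iff_of_nonneg (Real.sqrt_nonneg _)).2 fun i => by
    rw [Real.norm_eq_abs, ← Real.sqrt_sq_eq_abs]
    exact Real.sqrt_le_sqrt (Finset.single_le_sum (fun j _ => sq_nonneg (v j)) (Finset.mem_univ i))

theorem sqrt_sum_sq_le {ι : Type*} [Fintype ι] (v : ι → ℝ) :
    √(∑ i, v i ^ 2) ≤ √(Fintype.card ι) * ‖v‖ := by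
  rw [← Real.sqrt_sq (norm_nonneg v), ← Real.sqrt_mul (Nat.cast_nonneg _)]
  refine Real.sqrt_le_sqrt ?_
  calc ∑ i, v i ^ 2 ≤ ∑ _i : ι, ‖v‖ ^ 2 := Finset.sum_le_sum fun i _ => by
        simpa only [Real.norm_eq_abs, sq_abs] using
          pow_le_pow_left₀ (norm_nonneg _) (norm_le_pi_norm v i) 2
    _ = Fintype.card ι * ‖v‖ ^ 2 := by simp

theorem contDiff_eigenField {N : ℕ} (f : Fin N → ℝ) (Q : Fin N → Fin N → ℝ) :
    ContDiff ℝ 1 (eigenField f Q) :=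
  contDiff_pi.2 fun l => by unfold eigenField; fun_prop

section EulerScheme

open Set

variable {E : Type*} [NormedAddCommGroup E] [NormedSpace ℝ E] {g : E → E} {K : Set E}
  {L : NNReal} {x : ℝ → E}

/-- Reduces to `discrete_gronwall` by freezing `u` after time `n`. -/
theorem discrete_gronwall_of_forall_lt {u : ℕ → ℝ} {c b : ℝ} {n : ℕ} (hu0 : 0 ≤ u 0)
    (hc : 0 ≤ c) (hb : 0 ≤ b) (hu : ∀ k < n, u (k + 1) ≤ (1 + c) * u k + b) {r : ℕ}
    (hr : r ≤ n) : u r ≤ (u 0 + r * b) * Real.exp (r * c) := by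
  have h := discrete_gronwall (u := fun k => u (min k n))
    (c := fun k => if k < n then c else 0) (b := fun k => if k < n then b else 0)
    (n₀ := 0) hu0
    (fun k _ => by
      split_ifs with hk
      · simpa [min_eq_left hk.le, min_eq_left (Nat.succ_le_of_lt hk)] using hu k hk
      · simp [min_eq_right (not_lt.1 hk), min_eq_right (Nat.le_succ_of_le (not_lt.1 hk))])
    (fun k _ => by split_ifs <;> positivity) (fun k _ => by split_ifs <;> positivity)
    (Nat.zero_le r)
  have hsum : ∀ a : ℝ, ∑ k ∈ Finset.Ico 0 r, (if k < n then a else 0) = r * a := fun a => by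
    rw [Finset.sum_congr rfl fun k hk => if_pos ((Finset.mem_Ico.1 hk).2.trans_le hr)]
    simp
  simpa only [min_eq_left hr, Nat.zero_min, hsum] using h

theorem norm_sub_sub_smul_le_of_hasDerivWithinAt {B u v : ℝ} (huv : u ≤ v)
    (hx : ∀ t ∈ Icc u v, HasDerivWithinAt x (g (x t)) (Icc u v) t)
    (hxK : ∀ t ∈ Icc u v, x t ∈ K) (hgB : ∀ y ∈ K, ‖g y‖ ≤ B) (hgL : LipschitzOnWith L g K) :
    ‖x v - x u - (v - u) • g (x u)‖ ≤ L * B * (v - u) ^ 2 := by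
  have hu : u ∈ Icc u v := left_mem_Icc.2 huv
  have hB : 0 ≤ B := (norm_nonneg _).trans (hgB _ (hxK u hu))
  have hxlip : ∀ t ∈ Icc u v, ‖x t - x u‖ ≤ B * (v - u) := fun t ht => by
    have := (convex_Icc u v).norm_image_sub_le_of_norm_hasDerivWithin_le hx
      (fun t ht => hgB _ (hxK t ht)) hu ht
    rw [Real.norm_eq_abs, abs_of_nonneg (sub_nonneg.2 ht.1)] at this
    exact this.trans (by gcongr; exact ht.2)
  have hderiv : ∀ t ∈ Icc u v, HasDerivWithinAt (fun s => x s - s • g (x u))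
      (g (x t) - g (x u)) (Icc u v) t := fun t ht =>
    ((hx t ht).sub ((hasDerivWithinAt_id t _).smul_const (g (x u)))).congr_deriv
      (by simp)
  have hbound : ∀ t ∈ Icc u v, ‖g (x t) - g (x u)‖ ≤ L * B * (v - u) := fun t ht =>
    calc ‖g (x t) - g (x u)‖ ≤ L * ‖x t - x u‖ := hgL.norm_sub_le (hxK t ht) (hxK u hu)
      _ ≤ L * (B * (v - u)) := by gcongr; exact hxlip t ht
      _ = L * B * (v - u) := by ring
  have := (convex_Icc u v).norm_image_sub_le_of_norm_hasDerivWithin_le hderiv hbound hu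
    (right_mem_Icc.2 huv)
  rw [Real.norm_eq_abs, abs_of_nonneg (sub_nonneg.2 huv)] at this
  calc ‖x v - x u - (v - u) • g (x u)‖ = ‖x v - v • g (x u) - (x u - u • g (x u))‖ := by
        rw [sub_smul]; congr 1; abel
    _ ≤ L * B * (v - u) ^ 2 := by linarith

/-- The discrete Grönwall inequality is applied to the distance between `x` and the unperturbed
part `y - ε` of the scheme, which moves by exactly `τ g(y k)` at step `k`. -/
theorem norm_sub_le_of_perturbed_euler (hgL : LipschitzOnWith L g K) {y ε : ℕ → E}
    {τ C η T : ℝ} {n : ℕ} (hτ : 0 ≤ τ) (hC : 0 ≤ C) (hnT : n * τ ≤ T)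
    (hxK : ∀ k ≤ n, x (k * τ) ∈ K) (hyK : ∀ k ≤ n, y k ∈ K)
    (hstep : ∀ k < n, ‖x ((k + 1) * τ) - x (k * τ) - τ • g (x (k * τ))‖ ≤ C * τ ^ 2)
    (hy : ∀ r ≤ n, y r = y 0 + ∑ k ∈ Finset.range r, τ • g (y k) + ε r)
    (hε : ∀ r ≤ n, ‖ε r‖ ≤ η) {r : ℕ} (hr : r ≤ n) :
    ‖y r - x (r * τ)‖ ≤ (‖y 0 - x 0‖ + T * (L * η + C * τ)) * Real.exp (L * T) + η := by
  set e : ℕ → ℝ := fun k => ‖y k - ε k - x (k * τ)‖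
  set b := L * τ * η + C * τ ^ 2
  have hη : 0 ≤ η := (norm_nonneg _).trans (hε 0 (Nat.zero_le n))
  have hε0 : ε 0 = 0 := by simpa using hy 0 (Nat.zero_le n)
  have hb : 0 ≤ b := by positivity
  have hrec : ∀ k < n, e (k + 1) ≤ (1 + L * τ) * e k + b := by
    intro k hk
    have hyk : y k - ε k = y 0 + ∑ i ∈ Finset.range k, τ • g (y i) := by
      rw [hy k hk.le]; abel
    have hdiff : y (k + 1) - ε (k + 1) = y k - ε k + τ • g (y k) := by
      rw [hyk, hy (k + 1) hk, Finset.sum_range_succ]; abel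
    have hg : ‖g (y k) - g (x (k * τ))‖ ≤ L * (e k + η) :=
      (hgL.norm_sub_le (hyK k hk.le) (hxK k hk.le)).trans <| by
        gcongr
        calc ‖y k - x (k * τ)‖ = ‖(y k - ε k - x (k * τ)) + ε k‖ := by congr 1; abel
          _ ≤ e k + η := (norm_add_le _ _).trans (by gcongr; exact hε k hk.le)
    calc e (k + 1) = ‖(y k - ε k - x (k * τ)) + τ • (g (y k) - g (x (k * τ))) -
          (x ((k + 1) * τ) - x (k * τ) - τ • g (x (k * τ)))‖ := by
          simp only [e, hdiff, Nat.cast_succ, smul_sub]; congr 1; abel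
      _ ≤ e k + τ * (L * (e k + η)) + C * τ ^ 2 := by
          refine (norm_sub_le _ _).trans (add_le_add ((norm_add_le _ _).trans ?_) (hstep k hk))
          rw [norm_smul, Real.norm_eq_abs, abs_of_nonneg hτ]
          gcongr
      _ = (1 + L * τ) * e k + b := by ring
  have hgron := discrete_gronwall_of_forall_lt (u := e) (norm_nonneg _) (by positivity) hb hrec hr
  have hrT : (r : ℝ) * τ ≤ T := le_trans (by gcongr) hnT
  calc ‖y r - x (r * τ)‖ = ‖(y r - ε r - x (r * τ)) + ε r‖ := by congr 1; abel
    _ ≤ e r + η := (norm_add_le _ _).trans (by gcongr; exact hε r hr)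
    _ ≤ (e 0 + r * b) * Real.exp (r * (L * τ)) + η := by gcongr
    _ ≤ (‖y 0 - x 0‖ + T * (L * η + C * τ)) * Real.exp (L * T) + η := by
        have he0 : e 0 = ‖y 0 - x 0‖ := by simp [e, hε0]
        have hrb : (r : ℝ) * b ≤ T * (L * η + C * τ) :=
          calc (r : ℝ) * b = (r * τ) * (L * η + C * τ) := by ring
            _ ≤ T * (L * η + C * τ) := by gcongr
        have hexp : Real.exp (r * (L * τ)) ≤ Real.exp (L * T) :=
          Real.exp_le_exp.2 (by nlinarith [L.coe_nonneg])
        rw [he0]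
        have hT : 0 ≤ T := le_trans (by positivity) hnT
        exact add_le_add (mul_le_mul (by linarith) hexp (by positivity) (by positivity)) le_rfl

end EulerScheme

namespace Moran

def states (N m : ℕ) : Finset (Fin N → ℕ) :=
  (Fintype.piFinset fun _ => range (m + 1)).filter fun z => ∑ i, z i = m

noncomputable def freq {N : ℕ} (m : ℕ) (z : Fin N → ℕ) : Fin N → ℝ := fun l => (z l : ℝ) / m

variable {N m : ℕ} {f : Fin N → ℝ} {Q : Fin N → Fin N → ℝ} {lam : ℝ} {z z' : Fin N → ℕ}
  {i j : Fin N}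

theorem mem_states : z ∈ states N m ↔ ∑ i, z i = m := by
  simp only [states, mem_filter, Fintype.mem_piFinset, mem_range, and_iff_right_iff_imp]
  intro h i
  have := h ▸ single_le_sum (fun i _ => Nat.zero_le (z i)) (mem_univ i)
  omega

theorem cast_sum_of_mem_states (hz : z ∈ states N m) : ∑ i, (z i : ℝ) = m := by
  exact_mod_cast mem_states.1 hz

theorem moranRate_nonneg (hf : ∀ j, 0 ≤ f j) (hQ0 : ∀ i j, 0 ≤ Q i j) (hlam0 : 0 ≤ lam) :
    0 ≤ moranRate N m f Q lam z i j := by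
  unfold moranRate
  have : 0 ≤ ∑ k, f k * Q k j * z k :=
    sum_nonneg fun k _ => mul_nonneg (mul_nonneg (hf k) (hQ0 k j)) (Nat.cast_nonneg (z k))
  positivity

theorem moranRate_eq_zero (h : z i = 0) : moranRate N m f Q lam z i j = 0 := by
  simp [moranRate, h]

theorem sum_moranRate (hQ1 : ∀ i, ∑ j, Q i j = 1) :
    ∑ j, moranRate N m f Q lam z i j = (z i : ℝ) / m * ((∑ k, f k * z k) / (lam * m)) := by
  simp only [moranRate, ← mul_sum, sum_comm (γ := Fin N), mul_right_comm _ (Q _ _), ← sum_mul,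
    hQ1]
  ring

theorem moranStep_ne (hij : i ≠ j) : moranStep N z i j ≠ z := fun h => by
  have := congrFun h j
  simp [moranStep, Ne.symm hij] at this

theorem cast_moranStep (hij : i ≠ j) (hzi : z i ≠ 0) (l : Fin N) :
    (moranStep N z i j l : ℝ) = z l - (if l = i then 1 else 0) + (if l = j then 1 else 0) := by
  by_cases hli : l = i
  · subst hli
    simp [moranStep, hij, Nat.cast_sub (Nat.one_le_iff_ne_zero.2 hzi)]
  · simp [moranStep, hli]

theorem moranStep_mem_states (hz : z ∈ states N m) (hij : i ≠ j) (hzi : z i ≠ 0) :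
    moranStep N z i j ∈ states N m := by
  rw [mem_states, ← Nat.cast_inj (R := ℝ), Nat.cast_sum]
  simp [cast_moranStep hij hzi, sum_add_distrib, cast_sum_of_mem_states hz]

theorem sum_moranP_mul (hz : z ∈ states N m) (g : (Fin N → ℕ) → ℝ) :
    ∑ z' ∈ states N m, moranP N m f Q lam z z' * g z' =
      moranP N m f Q lam z z * g z +
        ∑ i, ∑ j ∈ univ.erase i, moranRate N m f Q lam z i j * g (moranStep N z i j) := by
  rw [← add_sum_erase _ _ hz]
  congr 1
  have hoff : ∀ z' ∈ (states N m).erase z, moranP N m f Q lam z z' * g z' =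
      ∑ i, ∑ j ∈ univ.erase i,
        if z' = moranStep N z i j then moranRate N m f Q lam z i j * g z' else 0 := by
    intro z' hz'
    simp only [moranP, if_neg (ne_of_mem_erase hz'), sum_mul, ite_mul, zero_mul]
  rw [sum_congr rfl hoff, sum_comm]
  refine sum_congr rfl fun i _ => ?_
  rw [sum_comm]
  refine sum_congr rfl fun j hj => ?_
  rw [sum_ite_eq']
  have hij : i ≠ j := (ne_of_mem_erase hj).symm
  by_cases hzi : z i = 0
  · simp [moranRate_eq_zero hzi]
  · rw [if_pos (mem_erase.2 ⟨moranStep_ne hij, moranStep_mem_states hz hij hzi⟩)]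

theorem sum_moranP (hz : z ∈ states N m) : ∑ z' ∈ states N m, moranP N m f Q lam z z' = 1 := by
  simpa [moranP] using sum_moranP_mul (f := f) (Q := Q) (lam := lam) hz fun _ => 1

theorem moranP_eq_zero_of_notMem (hz : z ∈ states N m) (hz' : z' ∉ states N m) :
    moranP N m f Q lam z z' = 0 := by
  rw [moranP, if_neg fun h : z' = z => hz' (h ▸ hz)]
  refine sum_eq_zero fun i _ => sum_eq_zero fun j hj => ?_
  by_cases hzi : z i = 0
  · simp [moranRate_eq_zero hzi]
  · rw [if_neg fun h : z' = _ => hz' (h ▸ moranStep_mem_states hz (ne_of_mem_erase hj).symm hzi)]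

theorem moranP_nonneg (hf : ∀ j, 0 ≤ f j) (hQ0 : ∀ i j, 0 ≤ Q i j) (hQ1 : ∀ i, ∑ j, Q i j = 1)
    (hlam : ∀ j, f j ≤ lam) (hlam0 : 0 < lam) (hm : m ≠ 0) (hz : z ∈ states N m)
    (z' : Fin N → ℕ) : 0 ≤ moranP N m f Q lam z z' := by
  have hrate : ∀ i j, 0 ≤ moranRate N m f Q lam z i j := fun i j =>
    moranRate_nonneg hf hQ0 hlam0.le
  unfold moranP
  split_ifs
  · rw [sub_nonneg]
    have hmR : (0 : ℝ) < m := by positivity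
    have hfz : ∑ k, f k * z k ≤ lam * m := by
      rw [← cast_sum_of_mem_states hz, mul_sum]
      exact sum_le_sum fun k _ => mul_le_mul_of_nonneg_right (hlam k) (Nat.cast_nonneg _)
    calc ∑ i, ∑ j ∈ univ.erase i, moranRate N m f Q lam z i j
        ≤ ∑ i, (z i : ℝ) / m * 1 := by
          refine sum_le_sum fun i _ => ?_
          refine (sum_le_sum_of_subset_of_nonneg (erase_subset _ _) fun j _ _ => hrate i j).trans ?_
          rw [sum_moranRate hQ1]
          gcongr
          rwa [div_le_one (by positivity)]
      _ = 1 := by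
          rw [← sum_mul, ← sum_div, cast_sum_of_mem_states hz, div_self hmR.ne', one_mul]
  · exact sum_nonneg fun i _ => sum_nonneg fun j _ => by split_ifs <;> simp [hrate]

theorem abs_sub_le_one_of_moranP_ne_zero (hp : moranP N m f Q lam z z' ≠ 0) (l : Fin N) :
    |(z' l : ℝ) - z l| ≤ 1 := by
  by_cases h : z' = z
  · simp [h]
  rw [moranP, if_neg h] at hp
  obtain ⟨i, -, hi⟩ := exists_ne_zero_of_sum_ne_zero hp
  obtain ⟨j, hj, hij⟩ := exists_ne_zero_of_sum_ne_zero hi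
  split_ifs at hij with hz'
  swap; · exact absurd rfl hij
  have hzi : z i ≠ 0 := fun h0 => hij (moranRate_eq_zero h0)
  rw [hz', cast_moranStep (ne_of_mem_erase hj).symm hzi]
  split_ifs <;> norm_num

theorem drift_moranP (hQ1 : ∀ i, ∑ j, Q i j = 1) (hlam : lam ≠ 0) (hm : m ≠ 0)
    (hz : z ∈ states N m) (l : Fin N) :
    MarkovPath.drift (states N m) (moranP N m f Q lam) (fun z => (z l : ℝ)) z =
      lam⁻¹ * eigenField f Q (freq m z) l := by
  set r := moranRate N m f Q lam z
  have hjump : ∀ i, ∀ j ∈ univ.erase i, r i j * ((moranStep N z i j l : ℝ) - z l) =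
      r i j * ((if l = j then 1 else 0) - if l = i then 1 else 0) := by
    intro i j hj
    by_cases hzi : z i = 0
    · simp [r, moranRate_eq_zero hzi]
    · rw [cast_moranStep (ne_of_mem_erase hj).symm hzi]; ring
  have hdiag : ∀ i, ∑ j ∈ univ.erase i, r i j * ((if l = j then 1 else 0) - if l = i then 1 else 0)
      = ∑ j, r i j * ((if l = j then (1 : ℝ) else 0) - if l = i then 1 else 0) := fun i =>
    sum_erase _ (by simp)
  have hin : ∑ i, r i l = (∑ k, f k * Q k l * z k) / (lam * m) := by
    simp only [r, moranRate, ← sum_mul, ← sum_div, cast_sum_of_mem_states hz]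
    field_simp
  rw [MarkovPath.drift, sum_moranP_mul hz, sub_self, mul_zero, zero_add,
    sum_congr rfl fun i _ => (sum_congr rfl (hjump i)).trans (hdiag i)]
  simp only [mul_sub, mul_ite, mul_one, mul_zero, sum_sub_distrib, sum_ite_eq, mem_univ,
    if_true]
  rw [sum_comm]
  simp only [sum_ite_eq, mem_univ, if_true]
  rw [hin, sum_moranRate hQ1]
  simp only [eigenField, freq, mul_div_assoc', ← sum_div]
  field_simp

noncomputable def mart (N m : ℕ) (f : Fin N → ℝ) (Q : Fin N → Fin N → ℝ) (lam : ℝ) (r : ℕ)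
    (c : ℕ → Fin N → ℕ) : Fin N → ℝ :=
  fun l => MarkovPath.mart (states N m) (moranP N m f Q lam) (fun z => (z l : ℝ)) r c

theorem norm_freq_le_one {z : Fin N → ℕ} (hz : z ∈ states N m) : ‖freq m z‖ ≤ 1 := by
  refine (pi_norm_le_iff_of_nonneg zero_le_one).2 fun l => ?_
  rw [freq, Real.norm_eq_abs, abs_of_nonneg (by positivity)]
  refine div_le_one_of_le₀ ?_ (Nat.cast_nonneg m)
  rw [← cast_sum_of_mem_states hz]
  exact_mod_cast single_le_sum (fun i _ => Nat.zero_le (z i)) (mem_univ l)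

theorem freq_eq_add_sum_add_mart (hQ1 : ∀ i, ∑ j, Q i j = 1) (hlam : lam ≠ 0) (hm : m ≠ 0)
    {c : ℕ → Fin N → ℕ} {r : ℕ} (hc : ∀ k < r, c k ∈ states N m) :
    freq m (c r) = freq m (c 0) + ∑ k ∈ range r, (lam * m)⁻¹ • eigenField f Q (freq m (c k)) +
      (m : ℝ)⁻¹ • mart N m f Q lam r c := by
  funext l
  simp only [Pi.add_apply, Pi.smul_apply, Finset.sum_apply, smul_eq_mul, mart, MarkovPath.mart,
    freq]
  rw [sum_congr rfl fun k hk => drift_moranP hQ1 hlam hm (hc k (mem_range.1 hk)) l,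
    ← mul_sum, ← mul_sum]
  field_simp
  ring

open Set Metric MeasureTheory Filter

/-- The bound of `norm_freq_sub_le`, for the initial distance `e` and the time step `τ = 1/(λm)`. -/
noncomputable def errorBound (T L B η e τ : ℝ) : ℝ :=
  (e + T * (L * η + L * B * τ)) * Real.exp (L * T) + η + B * τ

theorem tendsto_errorBound {T L B η : ℝ} {e τ : ℕ → ℝ} (he : Tendsto e atTop (nhds 0))
    (hτ : Tendsto τ atTop (nhds 0)) :
    Tendsto (fun m => errorBound T L B η (e m) (τ m)) atTop
      (nhds (η * (T * L * Real.exp (L * T) + 1))) := by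
  have := (((he.add (((hτ.const_mul (L * B)).const_add (L * η)).const_mul T)).mul_const
    (Real.exp (L * T))).add_const η).add (hτ.const_mul B)
  rw [show η * (T * L * Real.exp (L * T) + 1) =
    (0 + T * (L * η + L * B * 0)) * Real.exp (L * T) + η + B * 0 by ring]
  exact this

theorem norm_freq_sub_le_of_le (hQ1 : ∀ i, ∑ j, Q i j = 1) (hlam0 : 0 < lam) (hm : m ≠ 0)
    {x : ℝ → Fin N → ℝ} {T R B η : ℝ} {L : NNReal} (hT : 0 ≤ T) (hη : 0 ≤ η)
    (hx : ∀ t ∈ Icc 0 T, HasDerivWithinAt x (eigenField f Q (x t)) (Icc 0 T) t)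
    (hxR : ∀ t ∈ Icc 0 T, ‖x t‖ ≤ R) (hR : 1 ≤ R)
    (hL : LipschitzOnWith L (eigenField f Q) (closedBall 0 R))
    (hB : ∀ y ∈ closedBall 0 R, ‖eigenField f Q y‖ ≤ B)
    {c : ℕ → Fin N → ℕ} (hc : ∀ k ≤ ⌊lam * m * T⌋₊, c k ∈ states N m)
    (hmart : ∀ r ≤ ⌊lam * m * T⌋₊, ∀ l, |mart N m f Q lam r c l| ≤ η * m)
    {r : ℕ} (hr : r ≤ ⌊lam * m * T⌋₊) :
    ‖freq m (c r) - x (r * (lam * m)⁻¹)‖ ≤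
      (‖freq m (c 0) - x 0‖ + T * (L * η + L * B * (lam * m)⁻¹)) * Real.exp (L * T) + η := by
  set τ := (lam * m)⁻¹
  have hmR : (0 : ℝ) < m := by positivity
  have hlm : 0 < lam * m := by positivity
  have hnT : ⌊lam * m * T⌋₊ * τ ≤ T := by
    rw [← div_eq_mul_inv, div_le_iff₀ hlm, mul_comm T]
    exact Nat.floor_le (by positivity)
  have hgrid : ∀ k ≤ ⌊lam * m * T⌋₊, (k : ℝ) * τ ∈ Icc 0 T := fun k hk =>
    ⟨by positivity, le_trans (by gcongr) hnT⟩
  have hB0 : 0 ≤ B := (norm_nonneg _).trans (hB 0 (mem_closedBall_self (by linarith)))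
  have hstep : ∀ k < ⌊lam * m * T⌋₊, ‖x ((k + 1) * τ) - x (k * τ) - τ • eigenField f Q (x (k * τ))‖
      ≤ L * B * τ ^ 2 := fun k hk => by
    have hsub : Icc ((k : ℝ) * τ) ((k + 1) * τ) ⊆ Icc 0 T := Icc_subset_Icc
      (hgrid k hk.le).1 (by exact_mod_cast (hgrid (k + 1) hk).2)
    have := norm_sub_sub_smul_le_of_hasDerivWithinAt (by nlinarith [inv_pos.2 hlm])
      (fun s hs => (hx s (hsub hs)).mono hsub)
      (fun s hs => mem_closedBall_zero_iff.2 (hxR s (hsub hs))) hB hL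
    rwa [show ((k : ℝ) + 1) * τ - k * τ = τ by ring] at this
  simpa [mul_assoc] using norm_sub_le_of_perturbed_euler hL (y := fun k => freq m (c k))
    (ε := fun r => (m : ℝ)⁻¹ • mart N m f Q lam r c) (by positivity)
    (mul_nonneg L.coe_nonneg hB0) hnT
    (fun k hk => mem_closedBall_zero_iff.2 (hxR _ (hgrid k hk)))
    (fun k hk => mem_closedBall_zero_iff.2 ((norm_freq_le_one (hc k hk)).trans hR)) hstep
    (fun r hr => freq_eq_add_sum_add_mart hQ1 hlam0.ne' hm fun k hk => hc k (by omega))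
    (fun r hr => by
      rw [norm_smul, norm_inv, Real.norm_natCast, inv_mul_le_iff₀ hmR, mul_comm]
      exact (pi_norm_le_iff_of_nonneg (by positivity)).2 fun l => hmart r hr l) hr

theorem norm_freq_sub_le (hQ1 : ∀ i, ∑ j, Q i j = 1) (hlam0 : 0 < lam) (hm : m ≠ 0)
    {x : ℝ → Fin N → ℝ} {T R B η : ℝ} {L : NNReal} (hη : 0 ≤ η)
    (hx : ∀ t ∈ Icc 0 T, HasDerivWithinAt x (eigenField f Q (x t)) (Icc 0 T) t)
    (hxR : ∀ t ∈ Icc 0 T, ‖x t‖ ≤ R) (hR : 1 ≤ R)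
    (hL : LipschitzOnWith L (eigenField f Q) (closedBall 0 R))
    (hB : ∀ y ∈ closedBall 0 R, ‖eigenField f Q y‖ ≤ B)
    {c : ℕ → Fin N → ℕ} (hc : ∀ k ≤ ⌊lam * m * T⌋₊, c k ∈ states N m)
    (hmart : ∀ r ≤ ⌊lam * m * T⌋₊, ∀ l, |mart N m f Q lam r c l| ≤ η * m)
    {t : ℝ} (ht : t ∈ Icc 0 T) :
    ‖freq m (c ⌊lam * m * t⌋₊) - x t‖ ≤ errorBound T L B η ‖freq m (c 0) - x 0‖ (lam * m)⁻¹ := by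
  set τ := (lam * m)⁻¹
  set r := ⌊lam * m * t⌋₊
  have hlm : 0 < lam * m := by positivity
  have hr : r ≤ ⌊lam * m * T⌋₊ := Nat.floor_le_floor (mul_le_mul_of_nonneg_left ht.2 hlm.le)
  have hrt : r * τ ∈ Icc (t - τ) t := by
    have h1 := Nat.floor_le (mul_nonneg hlm.le ht.1)
    have h2 := Nat.lt_floor_add_one (lam * m * t)
    constructor
    · rw [← div_eq_mul_inv, le_div_iff₀ hlm, sub_mul, inv_mul_cancel₀ hlm.ne']
      linarith
    · rw [← div_eq_mul_inv, div_le_iff₀ hlm]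
      linarith
  have hinterp : ‖x (r * τ) - x t‖ ≤ B * τ := by
    have hB0 : 0 ≤ B := (norm_nonneg _).trans (hB 0 (mem_closedBall_self (by linarith)))
    have := (convex_Icc 0 T).norm_image_sub_le_of_norm_hasDerivWithin_le hx
      (fun s hs => hB _ (mem_closedBall_zero_iff.2 (hxR s hs))) ht
      ⟨by positivity, hrt.2.trans ht.2⟩
    rw [Real.norm_eq_abs, abs_of_nonpos (by linarith [hrt.2])] at this
    exact this.trans (by gcongr; linarith [hrt.1])
  calc ‖freq m (c r) - x t‖ ≤ ‖freq m (c r) - x (r * τ)‖ + ‖x (r * τ) - x t‖ :=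
        norm_sub_le_norm_sub_add_norm_sub _ _ _
    _ ≤ _ := add_le_add (norm_freq_sub_le_of_le hQ1 hlam0 hm (ht.1.trans ht.2) hη hx hxR hR hL
        hB hc hmart hr) hinterp
    _ = _ := by simp only [errorBound]; ring

theorem measure_le_of_exists_lt_abs_mart (hf : ∀ j, 0 ≤ f j) (hQ0 : ∀ i j, 0 ≤ Q i j)
    (hQ1 : ∀ i, ∑ j, Q i j = 1) (hlam : ∀ j, f j ≤ lam) (hlam0 : 0 < lam) (hm : m ≠ 0)
    {Ω : Type*} [MeasurableSpace Ω] {P : Measure Ω} [IsProbabilityMeasure P]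
    {Z : ℕ → Ω → Fin N → ℕ}
    (hMarkov : ∀ n : ℕ, ∀ h : ℕ → (Fin N → ℕ), ∀ z',
      P {ω | (∀ k ≤ n, Z k ω = h k) ∧ Z (n + 1) ω = z'}
        = ENNReal.ofReal (moranP N m f Q lam (h n) z') * P {ω | ∀ k ≤ n, Z k ω = h k})
    {z₀ : Fin N → ℕ} (hZ0 : ∀ ω, Z 0 ω = z₀) (hz₀ : z₀ ∈ states N m) {a : ℝ} (ha : 0 < a)
    {n : ℕ} {E : Set Ω}
    (hE : ∀ ω ∈ E, ∀ c : ℕ → Fin N → ℕ, (∀ k ≤ n, c k = Z k ω ∧ c k ∈ states N m) →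
      ∃ r ≤ n, ∃ l, a < |mart N m f Q lam r c l|) :
    P E ≤ ENNReal.ofReal (N * (n / a ^ 2)) := by
  simpa using MarkovPath.measure_le_of_exists_lt_abs_mart (φ := fun l z => (z l : ℝ))
    (fun z hz => moranP_nonneg hf hQ0 hQ1 hlam hlam0 hm hz) (fun z hz => sum_moranP hz)
    (fun z hz z' hz' => moranP_eq_zero_of_notMem hz hz')
    (fun l z _ z' hp => abs_sub_le_one_of_moranP_ne_zero hp l) hMarkov hZ0 hz₀ ha
    fun ω hω c hc => by
      obtain ⟨r, hr, l, hl⟩ := hE ω hω c hc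
      exact ⟨l, r, hr, hl⟩

theorem measure_far_from_solution_le (hf : ∀ j, 0 ≤ f j) (hQ0 : ∀ i j, 0 ≤ Q i j)
    (hQ1 : ∀ i, ∑ j, Q i j = 1) (hlam : ∀ j, f j ≤ lam) (hlam0 : 0 < lam) (hm : m ≠ 0)
    {Ω : Type*} [MeasurableSpace Ω] {P : Measure Ω} [IsProbabilityMeasure P]
    {Z : ℕ → Ω → Fin N → ℕ}
    (hMarkov : ∀ n : ℕ, ∀ h : ℕ → (Fin N → ℕ), ∀ z',
      P {ω | (∀ k ≤ n, Z k ω = h k) ∧ Z (n + 1) ω = z'}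
        = ENNReal.ofReal (moranP N m f Q lam (h n) z') * P {ω | ∀ k ≤ n, Z k ω = h k})
    {z₀ : Fin N → ℕ} (hZ0 : ∀ ω, Z 0 ω = z₀) (hz₀ : z₀ ∈ states N m)
    {x : ℝ → Fin N → ℝ} {T R B η δ : ℝ} {L : NNReal} (hT : 0 ≤ T) (hη : 0 < η)
    (hx : ∀ t ∈ Icc 0 T, HasDerivWithinAt x (eigenField f Q (x t)) (Icc 0 T) t)
    (hxR : ∀ t ∈ Icc 0 T, ‖x t‖ ≤ R) (hR : 1 ≤ R)
    (hL : LipschitzOnWith L (eigenField f Q) (closedBall 0 R))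
    (hB : ∀ y ∈ closedBall 0 R, ‖eigenField f Q y‖ ≤ B)
    (hδ : √N * errorBound T L B η ‖freq m z₀ - x 0‖ (lam * m)⁻¹ < δ) :
    P {ω | ∃ t ∈ Icc 0 T, δ < √(∑ i, ((Z ⌊lam * m * t⌋₊ ω i : ℝ) / m - x t i) ^ 2)} ≤
      ENNReal.ofReal (N * lam * T / η ^ 2 / m) := by
  calc _ ≤ ENNReal.ofReal (N * (⌊lam * m * T⌋₊ / (η * m) ^ 2)) := by
        refine measure_le_of_exists_lt_abs_mart hf hQ0 hQ1 hlam hlam0 hm hMarkov hZ0 hz₀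
          (by positivity) fun ω ⟨t, ht, hδt⟩ c hc => ?_
        by_contra! hmart
        have hr : ⌊lam * m * t⌋₊ ≤ ⌊lam * m * T⌋₊ :=
          Nat.floor_le_floor (mul_le_mul_of_nonneg_left ht.2 (by positivity))
        have hclose := norm_freq_sub_le hQ1 hlam0 hm hη.le hx hxR hR hL hB
          (fun k hk => (hc k hk).2) hmart ht
        rw [((hc 0 (Nat.zero_le _)).1).trans (hZ0 ω)] at hclose
        refine hδt.not_ge (le_trans ?_ hδ.le)
        calc _ = √(∑ i, (freq m (c ⌊lam * m * t⌋₊) - x t) i ^ 2) := by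
              simp [freq, (hc _ hr).1]
          _ ≤ √N * ‖freq m (c ⌊lam * m * t⌋₊) - x t‖ := by
              simpa using sqrt_sum_sq_le (freq m (c ⌊lam * m * t⌋₊) - x t)
          _ ≤ _ := mul_le_mul_of_nonneg_left hclose (Real.sqrt_nonneg _)
    _ ≤ ENNReal.ofReal (N * lam * T / η ^ 2 / m) := by
        refine ENNReal.ofReal_le_ofReal ?_
        calc (N : ℝ) * (⌊lam * m * T⌋₊ / (η * m) ^ 2) ≤ N * (lam * m * T / (η * m) ^ 2) := by
              gcongr; exact Nat.floor_le (by positivity)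
          _ = N * lam * T / η ^ 2 / m := by field_simp

end Moran

open MeasureTheory Filter

theorem moran_converges_to_eigen_general
    (N : ℕ) (f : Fin N → ℝ) (hf : ∀ j, 0 ≤ f j)
    (Q : Fin N → Fin N → ℝ) (hQ0 : ∀ i j, 0 ≤ Q i j) (hQ1 : ∀ i, ∑ j, Q i j = 1)
    (lam : ℝ) (hlam : ∀ j, f j ≤ lam) (hlam0 : 0 < lam)
    -- the Moran chains, one for each population size `m`
    (Ω : ℕ → Type*) [∀ m, MeasurableSpace (Ω m)]
    (P : ∀ m, Measure (Ω m)) (hP : ∀ m, IsProbabilityMeasure (P m))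
    (Z : ∀ m : ℕ, ℕ → Ω m → (Fin N → ℕ))
    -- deterministic initial conditions lying in `P^m_N`
    (z0 : ∀ m : ℕ, Fin N → ℕ)
    (hz0 : ∀ m, 1 ≤ m → ∑ i, z0 m i = m)
    (hZ0 : ∀ m, 1 ≤ m → ∀ ω, Z m 0 ω = z0 m)
    -- Markov property with the Moran transition matrix `p`
    (hMarkov : ∀ m, 1 ≤ m → ∀ n : ℕ, ∀ h : ℕ → (Fin N → ℕ), ∀ z' : Fin N → ℕ,
      P m {ω | (∀ k ≤ n, Z m k ω = h k) ∧ Z m (n + 1) ω = z'}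
        = ENNReal.ofReal (moranP N m f Q lam (h n) z')
          * P m {ω | ∀ k ≤ n, Z m k ω = h k})
    -- convergence of the initial conditions to `x⁰ ∈ S_N`
    (x0 : Fin N → ℝ)
    (hinit : Tendsto
      (fun m : ℕ => Real.sqrt (∑ i, ((z0 m i : ℝ) / m - x0 i) ^ 2)) atTop (nhds 0))
    -- `x` is the solution of Eigen's equations with `x(0) = x⁰`
    (x : ℝ → Fin N → ℝ) (hxinit : x 0 = x0)
    (hxderiv : ∀ t ≥ (0 : ℝ), ∀ i, HasDerivWithinAt (fun s => x s i)
      (∑ j, f j * Q j i * x t j - x t i * ∑ j, f j * x t j) (Set.Ici 0) t) :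
    ∀ δ > (0 : ℝ), ∀ T > (0 : ℝ),
      Tendsto (fun m : ℕ => P m {ω | ∃ t ∈ Set.Icc (0 : ℝ) T,
          δ < Real.sqrt (∑ i,
            ((Z m ⌊lam * m * t⌋₊ ω i : ℝ) / m - x t i) ^ 2)})
        atTop (nhds 0) := by
  intro δ hδ T hT
  have hx : ∀ t ∈ Set.Icc 0 T, HasDerivWithinAt x (eigenField f Q (x t)) (Set.Icc 0 T) t :=
    fun t ht => (hasDerivWithinAt_pi.2 (hxderiv t ht.1)).mono Set.Icc_subset_Ici_self
  obtain ⟨R, hR⟩ := isCompact_Icc.exists_bound_of_continuousOn fun t ht =>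
    (hx t ht).continuousWithinAt
  obtain ⟨L, hL⟩ := (contDiff_eigenField f Q).locallyLipschitz.locallyLipschitzOn
    |>.exists_lipschitzOnWith_of_compact (isCompact_closedBall 0 (max R 1))
  obtain ⟨B, hB⟩ := (isCompact_closedBall (0 : Fin N → ℝ) (max R 1)).exists_bound_of_continuousOn
    (contDiff_eigenField f Q).continuous.continuousOn
  obtain ⟨η, hη, hlim⟩ := exists_pos_mul_lt hδ (√N * (T * L * Real.exp (L * T) + 1))
  have herr := ((Moran.tendsto_errorBound (T := T) (L := L) (B := B) (η := η)
    (squeeze_zero (fun _ => norm_nonneg _) (fun m => norm_le_sqrt_sum_sq _) hinit)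
    (tendsto_natCast_atTop_atTop.const_mul_atTop hlam0).inv_tendsto_atTop).const_mul
      √N).eventually_lt_const (u := δ) (by linarith)
  have hupper := ENNReal.tendsto_ofReal
    (tendsto_const_div_atTop_nhds_zero_nat (N * lam * T / η ^ 2))
  rw [ENNReal.ofReal_zero] at hupper
  refine tendsto_of_tendsto_of_tendsto_of_le_of_le' tendsto_const_nhds hupper
    (Eventually.of_forall fun _ => zero_le) ?_
  filter_upwards [eventually_ge_atTop 1, herr] with m hm hm_err
  have := hP m
  exact Moran.measure_far_from_solution_le hf hQ0 hQ1 hlam hlam0 (by omega) (hMarkov m hm)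
    (hZ0 m hm) (Moran.mem_states.2 (hz0 m hm)) hT.le hη hx
    (fun t ht => (hR t ht).trans (le_max_left _ _)) (le_max_right _ _) hL hB (by rwa [hxinit])

/-- Convergence of the Moran model to Eigen's quasispecies model: if the initial
conditions `Z₀/m` converge to `x⁰`, then the rescaled and time-accelerated Moran
chain converges in probability, uniformly on every finite time interval, to the
solution of Eigen's equations started at `x⁰`. -/
theorem moran_converges_to_eigen
    (N : ℕ) (hN : 1 ≤ N) (f : Fin N → ℝ) (hf : ∀ j, 0 ≤ f j)
    (Q : Fin N → Fin N → ℝ) (hQ0 : ∀ i j, 0 ≤ Q i j) (hQ1 : ∀ i, ∑ j, Q i j = 1)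
    (lam : ℝ) (hlam : ∀ j, f j ≤ lam) (hlam0 : 0 < lam)
    -- the Moran chains, one for each population size `m`
    (Ω : ℕ → Type*) [∀ m, MeasurableSpace (Ω m)]
    (P : ∀ m, Measure (Ω m)) (hP : ∀ m, IsProbabilityMeasure (P m))
    (Z : ∀ m : ℕ, ℕ → Ω m → (Fin N → ℕ))
    (hZmeas : ∀ m n, Measurable (Z m n))
    -- deterministic initial conditions lying in `P^m_N`
    (z0 : ∀ m : ℕ, Fin N → ℕ)
    (hz0 : ∀ m, 1 ≤ m → ∑ i, z0 m i = m)
    (hZ0 : ∀ m, 1 ≤ m → ∀ ω, Z m 0 ω = z0 m)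
    -- Markov property with the Moran transition matrix `p`
    (hMarkov : ∀ m, 1 ≤ m → ∀ n : ℕ, ∀ h : ℕ → (Fin N → ℕ), ∀ z' : Fin N → ℕ,
      P m {ω | (∀ k ≤ n, Z m k ω = h k) ∧ Z m (n + 1) ω = z'}
        = ENNReal.ofReal (moranP N m f Q lam (h n) z')
          * P m {ω | ∀ k ≤ n, Z m k ω = h k})
    -- convergence of the initial conditions to `x⁰ ∈ S_N`
    (x0 : Fin N → ℝ) (hx0 : (∀ i, 0 ≤ x0 i) ∧ ∑ i, x0 i = 1)
    (hinit : Tendsto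
      (fun m : ℕ => Real.sqrt (∑ i, ((z0 m i : ℝ) / m - x0 i) ^ 2)) atTop (nhds 0))
    -- `x` is the solution of Eigen's equations with `x(0) = x⁰`
    (x : ℝ → Fin N → ℝ) (hxinit : x 0 = x0)
    (hxderiv : ∀ t ≥ (0 : ℝ), ∀ i, HasDerivWithinAt (fun s => x s i)
      (∑ j, f j * Q j i * x t j - x t i * ∑ j, f j * x t j) (Set.Ici 0) t) :
    ∀ δ > (0 : ℝ), ∀ T > (0 : ℝ),
      Tendsto (fun m : ℕ => P m {ω | ∃ t ∈ Set.Icc (0 : ℝ) T,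
          δ < Real.sqrt (∑ i,
            ((Z m ⌊lam * m * t⌋₊ ω i : ℝ) / m - x t i) ^ 2)})
        atTop (nhds 0) :=
  moran_converges_to_eigen_general N f hf Q hQ0 hQ1 lam hlam hlam0 Ω P hP Z z0 hz0 hZ0 hMarkov x0
    hinit x hxinit hxderiv
end
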